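/- arXiv:1512.00283 — 3 statements merged into one kernel-verified Lean document; each statement's English description precedes it below -/
import Mathlib

section
/- In the algebra A₅, the following relation holds among the elements α₁,…,α₅, β₁,…,β₅: −(α₁β₁ − β₁α₁) + (α₂β₂ − β₂α₂) + (α₃β₃ − β₃α₃) − (α₄β₄ − β₄α₄) + (α₅β₅ − β₅α₅) = 0. -/
/-- The defining relations of the Pontryagin algebra `A₅` of the pentagon:
`μᵢ² = 0` for all `i` and `μᵢμⱼ + μⱼμᵢ = 0` for the edges
`{1,2},{2,3},{3,4},{4,5},{5,1}` (here indexed cyclically by `Fin 5`). -/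
inductive PentagonRel (k : Type*) [CommRing k] : FreeAlgebra k (Fin 5) → FreeAlgebra k (Fin 5) → Prop
  | sq (i : Fin 5) : PentagonRel k (FreeAlgebra.ι k i * FreeAlgebra.ι k i) 0
  | edge (i : Fin 5) : PentagonRel k
      (FreeAlgebra.ι k i * FreeAlgebra.ι k (i + 1) + FreeAlgebra.ι k (i + 1) * FreeAlgebra.ι k i) 0

/-- `A₅`, the quotient of the free algebra `T⟨μ₁,…,μ₅⟩` by the two-sided ideal
generated by the pentagon relations. -/
abbrev A5 (k : Type*) [CommRing k] := RingQuot (PentagonRel k)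

/-- The generators `μ₁,…,μ₅` of `A₅` (indexed by `Fin 5`, so `mu k i = μ_{i+1}`). -/
def mu (k : Type*) [CommRing k] (i : Fin 5) : A5 k :=
  RingQuot.mkAlgHom k (PentagonRel k) (FreeAlgebra.ι k i)

set_option maxHeartbeats 0 in
/-- In `A₅`, with `α₁ = [μ₃,μ₁], α₂ = [μ₄,μ₁], α₃ = [μ₄,μ₂], α₄ = [μ₅,μ₂], α₅ = [μ₅,μ₃]`
(degree 2, `[μᵢ,μⱼ] = μᵢμⱼ + μⱼμᵢ`) and
`β₁ = [μ₄,[μ₅,μ₂]], β₂ = [μ₃,[μ₅,μ₂]], β₃ = [μ₁,[μ₅,μ₃]], β₄ = [μ₃,[μ₄,μ₁]], β₅ = [μ₂,[μ₄,μ₁]]`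
(degree 3, `[μᵢ,w] = μᵢw − wμᵢ` for `w` of degree 2), the single relation
`−[α₁,β₁] + [α₂,β₂] + [α₃,β₃] − [α₄,β₄] + [α₅,β₅] = 0` holds, where
`[αᵢ,βᵢ] = αᵢβᵢ − βᵢαᵢ`. -/
theorem pentagon_single_relation (k : Type*) [CommRing k] :
    let μ : Fin 5 → A5 k := mu k
    let c : A5 k → A5 k → A5 k := fun x y => x * y + y * x      -- bracket of two odd elements
    let c12 : A5 k → A5 k → A5 k := fun x y => x * y - y * x    -- bracket with an even element
    let α₁ := c (μ 2) (μ 0)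
    let α₂ := c (μ 3) (μ 0)
    let α₃ := c (μ 3) (μ 1)
    let α₄ := c (μ 4) (μ 1)
    let α₅ := c (μ 4) (μ 2)
    let β₁ := c12 (μ 3) (c (μ 4) (μ 1))
    let β₂ := c12 (μ 2) (c (μ 4) (μ 1))
    let β₃ := c12 (μ 0) (c (μ 4) (μ 2))
    let β₄ := c12 (μ 2) (c (μ 3) (μ 0))
    let β₅ := c12 (μ 1) (c (μ 3) (μ 0))
    (-(α₁ * β₁ - β₁ * α₁) + (α₂ * β₂ - β₂ * α₂) + (α₃ * β₃ - β₃ * α₃)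
      - (α₄ * β₄ - β₄ * α₄) + (α₅ * β₅ - β₅ * α₅) = 0) := by
  intro μ c c12 α₁ α₂ α₃ α₄ α₅ β₁ β₂ β₃ β₄ β₅
  have hedge : ∀ i : Fin 5, mu k i * mu k (i+1) + mu k (i+1) * mu k i = 0 := fun i => by
    simpa only [mu, map_mul, map_add, map_zero] using
      RingQuot.mkAlgHom_rel k (PentagonRel.edge (k := k) i)
  have h01 : mu k 0 * mu k 1 + mu k 1 * mu k 0 = 0 := hedge 0
  have h12 : mu k 1 * mu k 2 + mu k 2 * mu k 1 = 0 := hedge 1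
  have h23 : mu k 2 * mu k 3 + mu k 3 * mu k 2 = 0 := hedge 2
  have h34 : mu k 3 * mu k 4 + mu k 4 * mu k 3 = 0 := hedge 3
  have h40 : mu k 4 * mu k 0 + mu k 0 * mu k 4 = 0 := hedge 4
  show -((mu k 2 * mu k 0 + mu k 0 * mu k 2) * (mu k 3 * (mu k 4 * mu k 1 + mu k 1 * mu k 4) - (mu k 4 * mu k 1 + mu k 1 * mu k 4) * mu k 3) - (mu k 3 * (mu k 4 * mu k 1 + mu k 1 * mu k 4) - (mu k 4 * mu k 1 + mu k 1 * mu k 4) * mu k 3) * (mu k 2 * mu k 0 + mu k 0 * mu k 2)) + ((mu k 3 * mu k 0 + mu k 0 * mu k 3) * (mu k 2 * (mu k 4 * mu k 1 + mu k 1 * mu k 4) - (mu k 4 * mu k 1 + mu k 1 * mu k 4) * mu k 2) - (mu k 2 * (mu k 4 * mu k 1 + mu k 1 * mu k 4) - (mu k 4 * mu k 1 + mu k 1 * mu k 4) * mu k 2) * (mu k 3 * mu k 0 + mu k 0 * mu k 3)) + ((mu k 3 * mu k 1 + mu k 1 * mu k 3) * (mu k 0 * (mu k 4 * mu k 2 +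 mu k 2 * mu k 4) - (mu k 4 * mu k 2 + mu k 2 * mu k 4) * mu k 0) - (mu k 0 * (mu k 4 * mu k 2 + mu k 2 * mu k 4) - (mu k 4 * mu k 2 + mu k 2 * mu k 4) * mu k 0) * (mu k 3 * mu k 1 + mu k 1 * mu k 3)) - ((mu k 4 * mu k 1 + mu k 1 * mu k 4) * (mu k 2 * (mu k 3 * mu k 0 + mu k 0 * mu k 3) - (mu k 3 * mu k 0 + mu k 0 * mu k 3) * mu k 2) - (mu k 2 * (mu k 3 * mu k 0 + mu k 0 * mu k 3) - (mu k 3 * mu k 0 + mu k 0 * mu k 3) * mu k 2) * (mu k 4 * mu k 1 + mu k 1 * mu k 4)) + ((mu k 4 * mu k 2 + mu k 2 * mu k 4) * (mu k 1 * (mu k 3 * mu k 0 + mu k 0 * mu k 3) - (mu k 3 * mu k 0 + mu k 0 * mu k 3) * mu k 1) - (mu k 1 * (mu k 3 * mu k 0 + mu k 0 * mu k 3) - (mu k 3 * mu k 0 + mu k 0 * mu k 3) * mu k 1) * (mu k 4 * mu k 2 + mu k 2 * mu k 4)) = 0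
  have key : -((mu k 2 * mu k 0 + mu k 0 * mu k 2) * (mu k 3 * (mu k 4 * mu k 1 + mu k 1 * mu k 4) - (mu k 4 * mu k 1 + mu k 1 * mu k 4) * mu k 3) - (mu k 3 * (mu k 4 * mu k 1 + mu k 1 * mu k 4) - (mu k 4 * mu k 1 + mu k 1 * mu k 4) * mu k 3) * (mu k 2 * mu k 0 + mu k 0 * mu k 2)) + ((mu k 3 * mu k 0 + mu k 0 * mu k 3) * (mu k 2 * (mu k 4 * mu k 1 + mu k 1 * mu k 4) - (mu k 4 * mu k 1 + mu k 1 * mu k 4) * mu k 2) - (mu k 2 * (mu k 4 * mu k 1 + mu k 1 * mu k 4) - (mu k 4 * mu k 1 + mu k 1 * mu k 4) * mu k 2) * (mu k 3 * mu k 0 + mu k 0 * mu k 3)) + ((mu k 3 * mu k 1 + mu k 1 * mu k 3) * (mu k 0 * (mu k 4 * mu k 2 + mu k 2 * mu k 4) - (mu k 4 * mu k 2 + mu k 2 * mu k 4) * mu k 0) - (mu k 0 * (mu k 4 * mu k 2 + mu k 2 * mu k 4) - (mu k 4 * mu k 2 + mu k 2 * mu k 4) * mu k 0) * (mu k 3 *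 mu k 1 + mu k 1 * mu k 3)) - ((mu k 4 * mu k 1 + mu k 1 * mu k 4) * (mu k 2 * (mu k 3 * mu k 0 + mu k 0 * mu k 3) - (mu k 3 * mu k 0 + mu k 0 * mu k 3) * mu k 2) - (mu k 2 * (mu k 3 * mu k 0 + mu k 0 * mu k 3) - (mu k 3 * mu k 0 + mu k 0 * mu k 3) * mu k 2) * (mu k 4 * mu k 1 + mu k 1 * mu k 4)) + ((mu k 4 * mu k 2 + mu k 2 * mu k 4) * (mu k 1 * (mu k 3 * mu k 0 + mu k 0 * mu k 3) - (mu k 3 * mu k 0 + mu k 0 * mu k 3) * mu k 1) - (mu k 1 * (mu k 3 * mu k 0 + mu k 0 * mu k 3) - (mu k 3 * mu k 0 + mu k 0 * mu k 3) * mu k 1) * (mu k 4 * mu k 2 + mu k 2 * mu k 4)) =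
      -(mu k 2 * (mu k 0 * mu k 1 + mu k 1 * mu k 0) * mu k 3 * mu k 4) + mu k 4 * mu k 2 * (mu k 0 * mu k 1 + mu k 1 * mu k 0) * mu k 3 - mu k 4 * mu k 2 * mu k 3 * (mu k 0 * mu k 1 + mu k 1 * mu k 0) + (mu k 0 * mu k 1 + mu k 1 * mu k 0) * mu k 2 * mu k 3 * mu k 4 + mu k 3 * (mu k 0 * mu k 1 + mu k 1 * mu k 0) * mu k 2 * mu k 4 - mu k 3 * mu k 2 * (mu k 0 * mu k 1 + mu k 1 * mu k 0) * mu k 4 + mu k 3 * mu k 4 * (mu k 0 * mu k 1 + mu k 1 * mu k 0) * mu k 2 - mu k 4 * (mu k 0 * mu k 1 + mu k 1 * mu k 0) * mu k 2 * mu k 3 + mu k 0 * mu k 3 * (mu k 1 * mu k 2 + mu k 2 * mu k 1) * mu k 4 + mu k 3 * (mu k 1 * mu k 2 + mu k 2 * mu k 1) * mu k 0 * mu k 4 - (mu k 1 * mu k 2 + mu k 2 * mu k 1) * mu k 3 * mu k 0 * mu k 4 - mu k 0 * (mu k 1 * mu k 2 + mu k 2 * mu k 1) * mu k 3 * mu k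 4 - mu k 0 * mu k 4 * (mu k 1 * mu k 2 + mu k 2 * mu k 1) * mu k 3 + mu k 0 * mu k 4 * mu k 3 * (mu k 1 * mu k 2 + mu k 2 * mu k 1) + mu k 4 * (mu k 1 * mu k 2 + mu k 2 * mu k 1) * mu k 3 * mu k 0 - mu k 4 * mu k 3 * (mu k 1 * mu k 2 + mu k 2 * mu k 1) * mu k 0 - mu k 0 * mu k 4 * (mu k 2 * mu k 3 + mu k 3 * mu k 2) * mu k 1 + mu k 4 * (mu k 2 * mu k 3 + mu k 3 * mu k 2) * mu k 1 * mu k 0 + (mu k 2 * mu k 3 + mu k 3 * mu k 2) * mu k 0 * mu k 1 * mu k 4 - mu k 0 * (mu k 2 * mu k 3 + mu k 3 * mu k 2) * mu k 1 * mu k 4 + mu k 1 * (mu k 2 * mu k 3 + mu k 3 * mu k 2) * mu k 0 * mu k 4 - mu k 1 * mu k 0 * (mu k 2 * mu k 3 + mu k 3 * mu k 2) * mu k 4 - mu k 4 * mu k 1 * (mu k 2 * mu k 3 + mu k 3 * mu k 2) * mu k 0 + mu k 4 * mu k 1 * mu k 0 * (mu k 2 * mu k 3 + mu k 3 * mu k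 2) + (mu k 4 * mu k 0 + mu k 0 * mu k 4) * mu k 1 * mu k 2 * mu k 3 + mu k 1 * (mu k 4 * mu k 0 + mu k 0 * mu k 4) * mu k 3 * mu k 2 - mu k 1 * mu k 3 * mu k 2 * (mu k 4 * mu k 0 + mu k 0 * mu k 4) + mu k 2 * (mu k 4 * mu k 0 + mu k 0 * mu k 4) * mu k 1 * mu k 3 - mu k 2 * mu k 1 * (mu k 4 * mu k 0 + mu k 0 * mu k 4) * mu k 3 + mu k 2 * mu k 1 * mu k 3 * (mu k 4 * mu k 0 + mu k 0 * mu k 4) + mu k 2 * mu k 3 * (mu k 4 * mu k 0 + mu k 0 * mu k 4) * mu k 1 - mu k 3 * (mu k 4 * mu k 0 + mu k 0 * mu k 4) * mu k 1 * mu k 2 + mu k 3 * mu k 1 * (mu k 4 * mu k 0 + mu k 0 * mu k 4) * mu k 2 - mu k 3 * mu k 1 * mu k 2 * (mu k 4 * mu k 0 + mu k 0 * mu k 4) + (mu k 3 * mu k 4 + mu k 4 * mu k 3) * mu k 1 * mu k 2 * mu k 0 - mu k 0 * (mu k 3 * mu k 4 + mu k 4 * mu k 3) * mu k 1 * mu k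 2 - mu k 0 * mu k 2 * (mu k 3 * mu k 4 + mu k 4 * mu k 3) * mu k 1 + mu k 0 * mu k 2 * mu k 1 * (mu k 3 * mu k 4 + mu k 4 * mu k 3) - mu k 1 * (mu k 3 * mu k 4 + mu k 4 * mu k 3) * mu k 2 * mu k 0 - mu k 1 * mu k 0 * (mu k 3 * mu k 4 + mu k 4 * mu k 3) * mu k 2 - mu k 2 * (mu k 3 * mu k 4 + mu k 4 * mu k 3) * mu k 0 * mu k 1 + mu k 2 * mu k 0 * mu k 1 * (mu k 3 * mu k 4 + mu k 4 * mu k 3) - mu k 2 * mu k 1 * (mu k 3 * mu k 4 + mu k 4 * mu k 3) * mu k 0 + mu k 2 * mu k 1 * mu k 0 * (mu k 3 * mu k 4 + mu k 4 * mu k 3) := by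
    have ma : ∀ a b c : A5 k, a * (b + c) = a * b + a * c := fun a b c => mul_add a b c
    have am : ∀ a b c : A5 k, (a + b) * c = a * c + b * c := fun a b c => add_mul a b c
    have mn : ∀ a b : A5 k, a * -b = -(a * b) := fun a b => mul_neg a b
    have nm : ∀ a b : A5 k, -a * b = -(a * b) := fun a b => neg_mul a b
    have na : ∀ a b : A5 k, -(a + b) = -a + -b := fun a b => neg_add a b
    have nn : ∀ a : A5 k, - -a = a := fun a => neg_neg a
    have sub : ∀ a b : A5 k, a - b = a + -b := fun a b => sub_eq_add_neg a b
    have assoc : ∀ a b c : A5 k, a * b * c = a * (b * c) := fun a b c => mul_assoc a b c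
    simp only [sub, ma, am, mn, nm, na, nn, assoc]
    abel
  rw [key]
  simp only [h01, h12, h23, h34, h40, mul_zero, zero_mul, neg_zero, add_zero, zero_add,
    sub_zero, zero_sub]
end

section
/- In the Koszul complex (R₅, d) of the pentagon, each of the five elements t₁ = u₁u₂u₃ ⊗ v₄v₅, t₂ = u₂u₃u₄ ⊗ v₅v₁, t₃ = u₃u₄u₅ ⊗ v₁v₂, t₄ = u₁u₄u₅ ⊗ v₂v₃, t₅ = u₁u₂u₅ ⊗ v₃v₄ is a cocycle (d tᵢ = 0), and all five represent the same cohomology class: tᵢ − t₁ lies in the image of d for every i. In particular d(u₁u₂u₃u₄ ⊗ v₅) = u₂u₃u₄ ⊗ v₁v₅ − u₁u₂u₃ ⊗ v₄v₅. -/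
open scoped TensorProduct

/-- The exterior algebra `Λ[u₁,…,u₅]` over `ℤ`. -/
abbrev Ext5 := ExteriorAlgebra ℤ (Fin 5 → ℤ)

/-- The face ring `ℤ[K₅]` of the pentagon boundary complex: `ℤ[v₁,…,v₅]` modulo the
monomials `vᵢvⱼ` for the non-edges `{1,3},{1,4},{2,4},{2,5},{3,5}`, i.e. `vᵢv_{i+2}`
for all `i` (indices cyclic in `Fin 5`). -/
abbrev FaceRing5 := MvPolynomial (Fin 5) ℤ ⧸
  Ideal.span (Set.range fun i : Fin 5 =>
    (MvPolynomial.X i * MvPolynomial.X (i + 2) : MvPolynomial (Fin 5) ℤ))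

/-- The Koszul algebra `R₅ = Λ[u₁,…,u₅] ⊗_ℤ ℤ[K₅]`, with the `uᵢ` anticommuting with
each other and commuting with the `vⱼ`. -/
abbrev R5 := Ext5 ⊗[ℤ] FaceRing5

/-- The exterior generators `u₁,…,u₅` (indexed by `Fin 5`). -/
noncomputable def ug (i : Fin 5) : Ext5 := ExteriorAlgebra.ι ℤ (Pi.single i 1)

/-- The polynomial generators `v₁,…,v₅` of the face ring (indexed by `Fin 5`). -/
noncomputable def vg (i : Fin 5) : FaceRing5 :=
  Ideal.Quotient.mk _ (MvPolynomial.X i)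

/-- The submodule of exterior-degree-`p` elements of `Λ[u₁,…,u₅]`. -/
noncomputable def extDeg (p : ℕ) : Submodule ℤ Ext5 :=
  (LinearMap.range (ExteriorAlgebra.ι ℤ : (Fin 5 → ℤ) →ₗ[ℤ] Ext5)) ^ p

/-- `d` is the Koszul differential: a `ℤ`-linear map with `d(uᵢ ⊗ 1) = 1 ⊗ vᵢ`,
`d(1 ⊗ vᵢ) = 0`, satisfying the graded Leibniz rule
`d(ab) = (da)b + (−1)^p a(db)` for `a = x ⊗ m` with `x` of exterior degree `p`.
(These properties determine `d` uniquely.) -/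
def IsKoszulD (d : R5 →ₗ[ℤ] R5) : Prop :=
  (∀ i : Fin 5, d (ug i ⊗ₜ[ℤ] 1) = 1 ⊗ₜ[ℤ] vg i) ∧
  (∀ i : Fin 5, d (1 ⊗ₜ[ℤ] vg i) = 0) ∧
  (∀ (p : ℕ) (x : Ext5), x ∈ extDeg p → ∀ (m : FaceRing5) (b : R5),
    d ((x ⊗ₜ[ℤ] m) * b) = d (x ⊗ₜ[ℤ] m) * b + ((-1 : ℤ) ^ p) • ((x ⊗ₜ[ℤ] m) * d b))

/-! Index the generators by `ℤ/5` from `0` (so `u₁` is `ug 0`); then `vᵢvⱼ = 0` exactly when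
`j = i ± 2`. Since `d` kills the face ring, it acts on a monomial by the Koszul formula
`d(u_{i₀} ⋯ u_{i_{k-1}} ⊗ m) = ∑ⱼ (-1)ʲ u_{i₀} ⋯ û_{iⱼ} ⋯ u_{i_{k-1}} ⊗ v_{iⱼ} m`.
Up to an even permutation of the `u`'s, the five elements are the rotations
`t_{k+1} = u_k u_{k+1} u_{k+2} ⊗ v_{k+3} v_{k+4}`. Every term of `d t_{k+1}` contains some
`v_a v_{a±2}`, and in `d(u_k u_{k+1} u_{k+2} u_{k+3} ⊗ v_{k+4})` only the outer two terms survive,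
giving `t_{k+2} - t_{k+1}`; telescoping around the pentagon finishes the proof. -/

lemma ug_mem_extDeg_one (i : Fin 5) : ug i ∈ extDeg 1 := by
  rw [extDeg, pow_one]
  exact ⟨Pi.single i 1, rfl⟩

lemma one_mem_extDeg_zero : (1 : Ext5) ∈ extDeg 0 := by
  rw [extDeg, pow_zero]
  exact Submodule.one_le.mp le_rfl

lemma ug_mul_ug_anticomm (i j : Fin 5) : ug i * ug j = -(ug j * ug i) :=
  eq_neg_of_add_eq_zero_left (ExteriorAlgebra.ι_add_mul_swap _ _)

lemma ug_mul_ug_mul_ug_rotate (a b c : Fin 5) : ug a * ug b * ug c = ug c * ug a * ug b := by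
  rw [mul_assoc, ug_mul_ug_anticomm b c, mul_neg, ← mul_assoc, ug_mul_ug_anticomm a c, neg_mul,
    neg_neg]

lemma ug_tmul_one_mul_tmul (i : Fin 5) (x : Ext5) (m : FaceRing5) :
    (ug i ⊗ₜ[ℤ] (1 : FaceRing5)) * (x ⊗ₜ[ℤ] m) = (ug i * x) ⊗ₜ m := by
  rw [Algebra.TensorProduct.tmul_mul_tmul, one_mul]

lemma vg_mul_vg_add_two (i : Fin 5) : vg i * vg (i + 2) = 0 := by
  rw [vg, vg, ← map_mul, Ideal.Quotient.eq_zero_iff_mem]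
  exact Ideal.subset_span ⟨i, rfl⟩

lemma vg_mul_vg_eq_zero {i j : Fin 5} (h : j = i + 2 ∨ i = j + 2) : vg i * vg j = 0 := by
  rcases h with rfl | rfl
  · exact vg_mul_vg_add_two i
  · rw [mul_comm]
    exact vg_mul_vg_add_two j

noncomputable def pentagonCocycle (k : Fin 5) : R5 :=
  (ug k * ug (k + 1) * ug (k + 2)) ⊗ₜ (vg (k + 3) * vg (k + 4))

noncomputable def pentagonCochain (k : Fin 5) : R5 :=
  (ug k * ug (k + 1) * ug (k + 2) * ug (k + 3)) ⊗ₜ vg (k + 4)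

namespace IsKoszulD

variable {d : R5 →ₗ[ℤ] R5} (hd : IsKoszulD d)
include hd

lemma map_one_tmul_mul (m : FaceRing5) (b : R5) :
    d ((1 ⊗ₜ m) * b) = d (1 ⊗ₜ m) * b + (1 ⊗ₜ m) * d b := by
  simpa using hd.2.2 0 1 one_mem_extDeg_zero m b

lemma map_one_eq_zero : d 1 = 0 := by
  have h := hd.map_one_tmul_mul 1 1
  -- ring lemmas on `R5` need the type explicitly: unification through the ring structure of
  -- `Ext5 ⊗[ℤ] FaceRing5` fails on the `ℤ`-module diamond of the exterior algebra
  rw [← Algebra.TensorProduct.one_def, mul_one (M := R5), mul_one (M := R5),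
    one_mul (M := R5)] at h
  exact left_eq_add.mp h

lemma map_one_tmul (m : FaceRing5) : d (1 ⊗ₜ m) = 0 := by
  obtain ⟨p, rfl⟩ := Ideal.Quotient.mk_surjective m
  induction p using MvPolynomial.induction_on with
  | C a =>
    rw [← MvPolynomial.algebraMap_eq, Ideal.Quotient.mk_algebraMap, Algebra.algebraMap_eq_smul_one,
      TensorProduct.tmul_smul, map_smul, ← Algebra.TensorProduct.one_def, hd.map_one_eq_zero,
      smul_zero]
  | add p q hp hq => rw [map_add, TensorProduct.tmul_add, map_add, hp, hq, add_zero]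
  | mul_X p i hp =>
    rw [map_mul, ← one_mul (1 : Ext5), ← Algebra.TensorProduct.tmul_mul_tmul, hd.map_one_tmul_mul,
      hp, show Ideal.Quotient.mk _ (MvPolynomial.X i) = vg i from rfl, hd.2.1 i,
      zero_mul (M₀ := R5), mul_zero (M₀ := R5), add_zero]

lemma map_ug_mul_tmul (i : Fin 5) (x : Ext5) (m : FaceRing5) :
    d ((ug i * x) ⊗ₜ m) = x ⊗ₜ (vg i * m) - (ug i ⊗ₜ 1) * d (x ⊗ₜ m) := by
  have h := hd.2.2 1 (ug i) (ug_mem_extDeg_one i) 1 (x ⊗ₜ m)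
  rw [ug_tmul_one_mul_tmul, hd.1 i, Algebra.TensorProduct.tmul_mul_tmul, one_mul] at h
  rw [h, pow_one, neg_one_smul, sub_eq_add_neg]

lemma map_prod_tmul (l : List (Fin 5)) (m : FaceRing5) :
    d ((l.map ug).prod ⊗ₜ m) =
      ∑ j : Fin l.length, ((-1 : ℤ) ^ (j : ℕ) • ((l.eraseIdx j).map ug).prod) ⊗ₜ (vg l[j] * m) := by
  induction l with
  | nil => simpa using hd.map_one_tmul m
  | cons i l ih =>
    rw [List.map_cons, List.prod_cons, hd.map_ug_mul_tmul, ih, Finset.mul_sum (R := R5)]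
    erw [Fin.sum_univ_succ]
    simp only [ug_tmul_one_mul_tmul, mul_smul_comm, List.eraseIdx_cons_zero,
      List.eraseIdx_cons_succ, Fin.val_zero, Fin.val_succ, pow_zero, one_smul, pow_succ,
      mul_neg_one, neg_smul, TensorProduct.neg_tmul, Finset.sum_neg_distrib, sub_eq_add_neg,
      List.map_cons, List.prod_cons]
    rfl

lemma map_prod_tmul_eq_zero (l : List (Fin 5)) (m : FaceRing5) (h : ∀ a ∈ l, vg a * m = 0) :
    d ((l.map ug).prod ⊗ₜ m) = 0 := by
  rw [hd.map_prod_tmul]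
  exact Finset.sum_eq_zero fun j _ => by simp [h]

lemma map_pentagonCocycle (k : Fin 5) : d (pentagonCocycle k) = 0 := by
  have h : pentagonCocycle k = ([k, k + 1, k + 2].map ug).prod ⊗ₜ (vg (k + 3) * vg (k + 4)) := by
    simp [pentagonCocycle, mul_assoc]
  rw [h]
  refine hd.map_prod_tmul_eq_zero _ _ ?_
  simp only [List.mem_cons, List.not_mem_nil, or_false]
  rintro a (rfl | rfl | rfl)
  · rw [← mul_assoc, vg_mul_vg_eq_zero (by simp [add_assoc]), zero_mul]
  · rw [← mul_assoc, vg_mul_vg_eq_zero (by simp [add_assoc]), zero_mul]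
  · rw [mul_left_comm, vg_mul_vg_eq_zero (by simp [add_assoc]), mul_zero]

lemma map_pentagonCochain (k : Fin 5) :
    d (pentagonCochain k) = pentagonCocycle (k + 1) - pentagonCocycle k := by
  have h : pentagonCochain k = ([k, k + 1, k + 2, k + 3].map ug).prod ⊗ₜ vg (k + 4) := by
    simp [pentagonCochain, mul_assoc]
  rw [h, hd.map_prod_tmul]
  simp [Fin.sum_univ_four, pentagonCocycle, add_assoc, mul_assoc, vg_mul_vg_eq_zero,
    mul_comm (vg k)]
  rw [sub_eq_add_neg, ← TensorProduct.neg_tmul]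
  norm_num

open Fin.NatCast in
lemma pentagonCocycle_sub_mem_range (k : Fin 5) :
    pentagonCocycle k - pentagonCocycle 0 ∈ LinearMap.range d := by
  suffices h : ∀ n : ℕ, pentagonCocycle n - pentagonCocycle 0 ∈ LinearMap.range d by
    simpa using h k
  intro n
  induction n with
  | zero => simp
  | succ n ih =>
    rw [Nat.cast_succ, ← sub_add_sub_cancel _ (pentagonCocycle n), ← hd.map_pentagonCochain]
    exact add_mem (LinearMap.mem_range_self d _) ih

end IsKoszulD

/-- In the Koszul complex `(R₅, d)` of the pentagon, the five elements
`t₁ = u₁u₂u₃ ⊗ v₄v₅`, `t₂ = u₂u₃u₄ ⊗ v₅v₁`, `t₃ = u₃u₄u₅ ⊗ v₁v₂`,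
`t₄ = u₁u₄u₅ ⊗ v₂v₃`, `t₅ = u₁u₂u₅ ⊗ v₃v₄` are cocycles representing a common
cohomology class, and `d(u₁u₂u₃u₄ ⊗ v₅) = u₂u₃u₄ ⊗ v₁v₅ − u₁u₂u₃ ⊗ v₄v₅`. -/
theorem pentagon_top_class_cocycles (d : R5 →ₗ[ℤ] R5) (hd : IsKoszulD d) :
    let t₁ : R5 := (ug 0 * ug 1 * ug 2) ⊗ₜ[ℤ] (vg 3 * vg 4)
    let t₂ : R5 := (ug 1 * ug 2 * ug 3) ⊗ₜ[ℤ] (vg 4 * vg 0)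
    let t₃ : R5 := (ug 2 * ug 3 * ug 4) ⊗ₜ[ℤ] (vg 0 * vg 1)
    let t₄ : R5 := (ug 0 * ug 3 * ug 4) ⊗ₜ[ℤ] (vg 1 * vg 2)
    let t₅ : R5 := (ug 0 * ug 1 * ug 4) ⊗ₜ[ℤ] (vg 2 * vg 3)
    ((d t₁ = 0 ∧ d t₂ = 0 ∧ d t₃ = 0 ∧ d t₄ = 0 ∧ d t₅ = 0) ∧
     (t₁ - t₁ ∈ LinearMap.range d ∧ t₂ - t₁ ∈ LinearMap.range d ∧
      t₃ - t₁ ∈ LinearMap.range d ∧ t₄ - t₁ ∈ LinearMap.range d ∧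
      t₅ - t₁ ∈ LinearMap.range d) ∧
     d ((ug 0 * ug 1 * ug 2 * ug 3) ⊗ₜ[ℤ] vg 4) =
       (ug 1 * ug 2 * ug 3) ⊗ₜ[ℤ] (vg 0 * vg 4) - (ug 0 * ug 1 * ug 2) ⊗ₜ[ℤ] (vg 3 * vg 4)) := by
  intro t₁ t₂ t₃ t₄ t₅
  have h₁ : t₁ = pentagonCocycle 0 := by simp [t₁, pentagonCocycle]
  have h₂ : t₂ = pentagonCocycle 1 := by simp [t₂, pentagonCocycle]
  have h₃ : t₃ = pentagonCocycle 2 := by simp [t₃, pentagonCocycle]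
  have h₄ : t₄ = pentagonCocycle 3 := by
    rw [pentagonCocycle, ug_mul_ug_mul_ug_rotate]
    rfl
  have h₅ : t₅ = pentagonCocycle 4 := by
    rw [pentagonCocycle, ug_mul_ug_mul_ug_rotate, ug_mul_ug_mul_ug_rotate]
    rfl
  rw [h₁, h₂, h₃, h₄, h₅]
  refine ⟨⟨hd.map_pentagonCocycle 0, hd.map_pentagonCocycle 1, hd.map_pentagonCocycle 2,
    hd.map_pentagonCocycle 3, hd.map_pentagonCocycle 4⟩, ⟨hd.pentagonCocycle_sub_mem_range 0,
    hd.pentagonCocycle_sub_mem_range 1, hd.pentagonCocycle_sub_mem_range 2,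
    hd.pentagonCocycle_sub_mem_range 3, hd.pentagonCocycle_sub_mem_range 4⟩, ?_⟩
  simpa [pentagonCochain, pentagonCocycle, mul_comm (vg 4) (vg 0)] using hd.map_pentagonCochain 0
end

section
/- In the algebra A₅ the following identity holds: α₃β₃ − β₃α₃ = μ₂μ₄μ₁μ₃μ₅ + μ₂μ₄μ₁μ₅μ₃ − μ₂μ₃μ₄μ₁μ₅ − μ₂μ₅μ₃μ₄μ₁ − μ₄μ₁μ₂μ₃μ₅ − μ₄μ₁μ₂μ₅μ₃ − μ₃μ₄μ₁μ₂μ₅ − μ₄μ₂μ₅μ₃μ₁ − μ₁μ₃μ₅μ₂μ₄ + μ₁μ₅μ₂μ₃μ₄ − μ₃μ₁μ₅μ₂μ₄ + μ₅μ₃μ₁μ₂μ₄ + μ₁μ₃μ₄μ₅μ₂ + μ₁μ₄μ₅μ₂μ₃ + μ₃μ₁μ₄μ₅μ₂ + μ₅μ₃μ₁μ₄μ₂. -/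
/-- The edge anticommutation relations hold in `A₅`. -/
theorem mu_edge_rel (k : Type*) [CommRing k] (i : Fin 5) :
    mu k i * mu k (i + 1) + mu k (i + 1) * mu k i = 0 := by
  have h := RingQuot.mkAlgHom_rel k (PentagonRel.edge (k := k) i)
  simpa only [mu, map_add, map_mul, map_zero] using h

/-- Auxiliary noncommutative-ring identity used in the proof below. -/
theorem pentagon_expand_aux {R : Type*} [Ring R] (x0 x1 x2 x3 x4 : R) :

      ((x3 * x1 + x1 * x3) *
        (x0 * (x4 * x2 + x2 * x4) -
          (x4 * x2 + x2 * x4) * x0) -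
        (x0 * (x4 * x2 + x2 * x4) -
          (x4 * x2 + x2 * x4) * x0) *
        (x3 * x1 + x1 * x3)) -
      (x1 * x3 * x0 * x2 * x4
        + x1 * x3 * x0 * x4 * x2
        - x1 * x2 * x3 * x0 * x4
        - x1 * x4 * x2 * x3 * x0
        - x3 * x0 * x1 * x2 * x4
        - x3 * x0 * x1 * x4 * x2
        - x2 * x3 * x0 * x1 * x4
        - x3 * x1 * x4 * x2 * x0
        - x0 * x2 * x4 * x1 * x3
        + x0 * x4 * x1 * x2 * x3
        - x2 * x0 * x4 * x1 * x3
        + x4 * x2 * x0 * x1 * x3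
        + x0 * x2 * x3 * x4 * x1
        + x0 * x3 * x4 * x1 * x2
        + x2 * x0 * x3 * x4 * x1
        + x4 * x2 * x0 * x3 * x1) =
      x3 * (x0 * x1 + x1 * x0) * x4 * x2
        + x3 * (x0 * x1 + x1 * x0) * x2 * x4
        - x3 * (x1 * x2 + x2 * x1) * x4 * x0
        + (x2 * x3 + x3 * x2) * x1 * x4 * x0
        - x2 * x3 * x1 * (x4 * x0 + x0 * x4)
        + x2 * x3 * (x0 * x1 + x1 * x0) * x4
        - x1 * (x2 * x3 + x3 * x2) * x4 * x0
        + x1 * x2 * x3 * (x4 * x0 + x0 * x4)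
        - x0 * x4 * (x2 * x3 + x3 * x2) * x1
        + x0 * (x3 * x4 + x4 * x3) * x2 * x1
        - x0 * x3 * x4 * (x1 * x2 + x2 * x1)
        - x0 * x4 * (x1 * x2 + x2 * x1) * x3
        - x0 * x2 * (x3 * x4 + x4 * x3) * x1
        + x2 * (x4 * x0 + x0 * x4) * x3 * x1
        - x2 * x0 * (x3 * x4 + x4 * x3) * x1
        + x2 * (x4 * x0 + x0 * x4) * x1 * x3
        + x1 * x4 * (x2 * x3 + x3 * x2) * x0
        - x1 * (x3 * x4 + x4 * x3) * x2 * x0 := by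
  simp only [mul_add, add_mul, sub_eq_add_neg, neg_add_rev, neg_mul, mul_neg, neg_neg,
    mul_assoc]
  abel

set_option maxHeartbeats 400000 in
/-- In `A₅`, with `α₃ = [μ₄,μ₂]` (degree 2, `[μᵢ,μⱼ] = μᵢμⱼ + μⱼμᵢ`) and
`β₃ = [μ₁,[μ₅,μ₃]]` (degree 3, `[μᵢ,w] = μᵢw − wμᵢ` for `w` of degree 2),
the stated expansion of `α₃β₃ − β₃α₃` into monomials holds. -/
theorem pentagon_commutator_expansion_17 (k : Type*) [CommRing k] :
    let μ : Fin 5 → A5 k := mu k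
    let c : A5 k → A5 k → A5 k := fun x y => x * y + y * x      -- bracket of two odd elements
    let c12 : A5 k → A5 k → A5 k := fun x y => x * y - y * x    -- bracket with an even element
    let α := c (μ 3) (μ 1)
    let β := c12 (μ 0) (c (μ 4) (μ 2))
    (α * β - β * α =
        μ 1 * μ 3 * μ 0 * μ 2 * μ 4
        + μ 1 * μ 3 * μ 0 * μ 4 * μ 2
        - μ 1 * μ 2 * μ 3 * μ 0 * μ 4
        - μ 1 * μ 4 * μ 2 * μ 3 * μ 0
        - μ 3 * μ 0 * μ 1 * μ 2 * μ 4
        - μ 3 * μ 0 * μ 1 * μ 4 * μ 2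
        - μ 2 * μ 3 * μ 0 * μ 1 * μ 4
        - μ 3 * μ 1 * μ 4 * μ 2 * μ 0
        - μ 0 * μ 2 * μ 4 * μ 1 * μ 3
        + μ 0 * μ 4 * μ 1 * μ 2 * μ 3
        - μ 2 * μ 0 * μ 4 * μ 1 * μ 3
        + μ 4 * μ 2 * μ 0 * μ 1 * μ 3
        + μ 0 * μ 2 * μ 3 * μ 4 * μ 1
        + μ 0 * μ 3 * μ 4 * μ 1 * μ 2
        + μ 2 * μ 0 * μ 3 * μ 4 * μ 1
        + μ 4 * μ 2 * μ 0 * μ 3 * μ 1) := by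
  intro μ c c12 α β
  have h01 : mu k 0 * mu k 1 + mu k 1 * mu k 0 = 0 := mu_edge_rel k 0
  have h12 : mu k 1 * mu k 2 + mu k 2 * mu k 1 = 0 := mu_edge_rel k 1
  have h23 : mu k 2 * mu k 3 + mu k 3 * mu k 2 = 0 := mu_edge_rel k 2
  have h34 : mu k 3 * mu k 4 + mu k 4 * mu k 3 = 0 := mu_edge_rel k 3
  have h40 : mu k 4 * mu k 0 + mu k 0 * mu k 4 = 0 := mu_edge_rel k 4
  show ((mu k 3 * mu k 1 + mu k 1 * mu k 3) *
        (mu k 0 * (mu k 4 * mu k 2 + mu k 2 * mu k 4) -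
          (mu k 4 * mu k 2 + mu k 2 * mu k 4) * mu k 0) -
        (mu k 0 * (mu k 4 * mu k 2 + mu k 2 * mu k 4) -
          (mu k 4 * mu k 2 + mu k 2 * mu k 4) * mu k 0) *
        (mu k 3 * mu k 1 + mu k 1 * mu k 3) =
      mu k 1 * mu k 3 * mu k 0 * mu k 2 * mu k 4
        + mu k 1 * mu k 3 * mu k 0 * mu k 4 * mu k 2
        - mu k 1 * mu k 2 * mu k 3 * mu k 0 * mu k 4
        - mu k 1 * mu k 4 * mu k 2 * mu k 3 * mu k 0
        - mu k 3 * mu k 0 * mu k 1 * mu k 2 * mu k 4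
        - mu k 3 * mu k 0 * mu k 1 * mu k 4 * mu k 2
        - mu k 2 * mu k 3 * mu k 0 * mu k 1 * mu k 4
        - mu k 3 * mu k 1 * mu k 4 * mu k 2 * mu k 0
        - mu k 0 * mu k 2 * mu k 4 * mu k 1 * mu k 3
        + mu k 0 * mu k 4 * mu k 1 * mu k 2 * mu k 3
        - mu k 2 * mu k 0 * mu k 4 * mu k 1 * mu k 3
        + mu k 4 * mu k 2 * mu k 0 * mu k 1 * mu k 3
        + mu k 0 * mu k 2 * mu k 3 * mu k 4 * mu k 1
        + mu k 0 * mu k 3 * mu k 4 * mu k 1 * mu k 2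
        + mu k 2 * mu k 0 * mu k 3 * mu k 4 * mu k 1
        + mu k 4 * mu k 2 * mu k 0 * mu k 3 * mu k 1)
  rw [← sub_eq_zero]
  rw [pentagon_expand_aux (mu k 0) (mu k 1) (mu k 2) (mu k 3) (mu k 4)]
  simp only [h01, h12, h23, h34, h40, mul_zero, zero_mul, add_zero, zero_add, sub_zero,
    neg_zero, sub_self]
end
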